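/- Let P be a finite poset, k a field, and Q a full subposet of P with inclusion ι : Q ↪ P. For every interval I of Q, one has Θ(k_I) ≅ k_{conv(I)}, where conv(I) = {x ∈ P : a ≤ x ≤ b for some a, b ∈ I} is the convex hull of I in P (which is an interval of P). In particular, Θ sends interval modules over Q to interval modules over P. -/

import Mathlib

open CategoryTheory CategoryTheory.Limits

attribute [local instance] CategoryTheory.Limits.HasFiniteBiproducts.of_hasFiniteProducts

section Posets

variable {P : Type} [PartialOrder P]

/-- Zigzag connectivity of two elements of a subset `S` of a poset: they are linked by a
zigzag of comparable pairs inside `S`. -/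
def ZigzagConnIn (S : Set P) (a b : S) : Prop :=
  Relation.ReflTransGen (fun u v : S => (u : P) ≤ v ∨ (v : P) ≤ u) a b

/-- A subset of a poset is convex if `x ≤ z ≤ y` with `x, y` in the subset implies `z` is. -/
def IsConvex (S : Set P) : Prop :=
  ∀ ⦃x y z : P⦄, x ∈ S → y ∈ S → x ≤ z → z ≤ y → z ∈ S

/-- An interval of a poset: a nonempty, convex, zigzag-connected subset. -/
def IsIntervalSet (S : Set P) : Prop :=
  S.Nonempty ∧ IsConvex S ∧ ∀ a b : S, ZigzagConnIn S a b

end Posets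

section IntervalModules

variable (k : Type) [Field k] {P : Type} [PartialOrder P]

open Classical in
/-- The linear map between the fibers of the interval module. -/
noncomputable def intervalModuleAux (S : Set P) (p q : P) :
    ↥(if p ∈ S then (⊤ : Submodule k k) else ⊥) →ₗ[k]
      ↥(if q ∈ S then (⊤ : Submodule k k) else ⊥) where
  toFun x := ⟨(if p ∈ S ∧ q ∈ S then (1 : k) else 0) * x.1, by
    by_cases hq : q ∈ S
    · rw [if_pos hq]; exact Submodule.mem_top
    · rw [if_neg hq, if_neg (fun h => hq h.2), zero_mul]; exact Submodule.zero_mem _⟩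
  map_add' x y := by ext; simp [mul_add]
  map_smul' c x := by ext; simp

open Classical in
/-- The interval module `k_S` associated to a convex subset `S` of a poset `P`:
it is `k` at points of `S`, `0` elsewhere, with identity structure maps inside `S`. -/
noncomputable def intervalModule (S : Set P) (hS : IsConvex S) : P ⥤ ModuleCat.{0} k where
  obj p := ModuleCat.of k ↥(if p ∈ S then (⊤ : Submodule k k) else ⊥)
  map {p q} _ := ModuleCat.ofHom (intervalModuleAux k S p q)
  map_id p := by
    apply ModuleCat.hom_ext
    apply LinearMap.ext
    rintro ⟨x, hx⟩
    apply Subtype.ext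
    show (if p ∈ S ∧ p ∈ S then (1 : k) else 0) * x = x
    by_cases hp : p ∈ S
    · simp [hp]
    · rw [if_neg hp] at hx
      simp [hp, (Submodule.mem_bot k).mp hx]
  map_comp {p q r} f g := by
    apply ModuleCat.hom_ext
    apply LinearMap.ext
    rintro ⟨x, hx⟩
    apply Subtype.ext
    show (if p ∈ S ∧ r ∈ S then (1 : k) else 0) * x
      = (if q ∈ S ∧ r ∈ S then (1 : k) else 0) * ((if p ∈ S ∧ q ∈ S then (1 : k) else 0) * x)
    by_cases hp : p ∈ S
    · by_cases hr : r ∈ S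
      · have hq : q ∈ S := hS hp hr (leOfHom f) (leOfHom g)
        simp [hp, hq, hr]
      · simp [hr]
    · rw [if_neg hp] at hx
      simp [(Submodule.mem_bot k).mp hx]

/-- A persistence module is an interval module if it is isomorphic to `k_S` for some
interval `S`. -/
def IsIntervalModule (M : P ⥤ ModuleCat.{0} k) : Prop :=
  ∃ (S : Set P) (hS : IsIntervalSet S), Nonempty (M ≅ intervalModule k S hS.2.1)

/-- A persistence module is interval-decomposable if it is isomorphic to a finite direct sum
of interval modules. -/
def IsIntervalDecomposable (M : P ⥤ ModuleCat.{0} k) : Prop :=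
  ∃ (n : ℕ) (J : Fin n → (P ⥤ ModuleCat.{0} k)),
    (∀ i, IsIntervalModule k (J i)) ∧ Nonempty (M ≅ ⨁ J)

/-- The support of a persistence module. -/
def moduleSupport (M : P ⥤ ModuleCat.{0} k) : Set P := {p : P | ¬ IsZero (M.obj p)}

/-- A persistence module valued in finite-dimensional vector spaces. -/
def PointwiseFinite (M : P ⥤ ModuleCat.{0} k) : Prop :=
  ∀ p : P, FiniteDimensional k (M.obj p)

end IntervalModules

section Approximations

variable {C : Type*} [Category C]

/-- `f : X ⟶ M` is a right `𝒳`-approximation of `M` if `X ∈ 𝒳` and every morphism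
from an object of `𝒳` to `M` factors through `f`. -/
def IsRightApproximation (𝒳 : C → Prop) {X M : C} (f : X ⟶ M) : Prop :=
  𝒳 X ∧ ∀ ⦃Y : C⦄ (g : Y ⟶ M), 𝒳 Y → ∃ h : Y ⟶ X, h ≫ f = g

/-- `f : X ⟶ M` is right minimal if every endomorphism `g` of `X` with `f ∘ g = f`
is an isomorphism. -/
def IsRightMinimal {X M : C} (f : X ⟶ M) : Prop :=
  ∀ g : X ⟶ X, g ≫ f = f → IsIso g

end Approximations

/-- An interval cover: a right minimal approximation by interval-decomposable modules. -/
def IsIntervalCover (k : Type) [Field k] {P : Type} [PartialOrder P]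
    {X M : P ⥤ ModuleCat.{0} k} (f : X ⟶ M) : Prop :=
  IsRightApproximation (IsIntervalDecomposable k) f ∧ IsRightMinimal f

section Resolutions

variable {C : Type*} [Category C] [Limits.HasZeroMorphisms C]

/-- `M` admits a resolution `0 ⟶ J_n ⟶ ⋯ ⟶ J_1 ⟶ J_0 ⟶ M ⟶ 0` of length `n` by objects
of `𝒳`: an exact sequence in which every `J_i` lies in `𝒳`.  (The data is encoded by an
`ℕ`-indexed complex which vanishes in degrees `> n` and is exact everywhere.) -/
def HasResolutionOfLength (𝒳 : C → Prop) (n : ℕ) (M : C) : Prop :=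
  ∃ (J : ℕ → C) (d : ∀ i, J (i + 1) ⟶ J i) (f : J 0 ⟶ M) (w0 : d 0 ≫ f = 0)
    (w : ∀ i, d (i + 1) ≫ d i = 0),
    (∀ i, i ≤ n → 𝒳 (J i)) ∧ (∀ i, n < i → IsZero (J i)) ∧
    Epi f ∧ (ShortComplex.mk (d 0) f w0).Exact ∧
    ∀ i, (ShortComplex.mk (d (i + 1)) (d i) (w i)).Exact

end Resolutions

section KanTheta

variable (k : Type) [Field k] {P : Type} [PartialOrder P] (Q : Set P)

/-- The restriction functor along the inclusion `ι : Q ↪ P` of a full subposet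
(precomposition with `ι`). -/
noncomputable def resFunctor : (P ⥤ ModuleCat.{0} k) ⥤ (↥Q ⥤ ModuleCat.{0} k) :=
  (CategoryTheory.Functor.whiskeringLeft _ _ _).obj (Subtype.mono_coe (· ∈ Q)).functor

variable (L R : (↥Q ⥤ ModuleCat.{0} k) ⥤ (P ⥤ ModuleCat.{0} k))
variable (adjL : L ⊣ resFunctor k Q) (adjR : resFunctor k Q ⊣ R)

/-- The canonical morphism `θ_M : Lan(M) ⟶ Ran(M)` corresponding to the identity of `M`
under the adjunction isomorphisms
`Hom(Lan M, Ran M) ≅ Hom(M, Res (Ran M)) ≅ Hom(M, M)`. -/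
noncomputable def thetaHom [IsIso adjR.counit] (M : ↥Q ⥤ ModuleCat.{0} k) :
    L.obj M ⟶ R.obj M :=
  (adjL.homEquiv M (R.obj M)).symm ((asIso adjR.counit).inv.app M)

lemma thetaHom_naturality [IsIso adjR.counit] {M N : ↥Q ⥤ ModuleCat.{0} k} (f : M ⟶ N) :
    L.map f ≫ thetaHom k Q L R adjL adjR N = thetaHom k Q L R adjL adjR M ≫ R.map f := by
  dsimp [thetaHom]
  rw [← Adjunction.homEquiv_naturality_left_symm, ← Adjunction.homEquiv_naturality_right_symm]
  congr 1
  simpa using ((asIso adjR.counit).inv.naturality f)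

/-- The functor `Θ`, sending `M` to the image of `θ_M : Lan(M) ⟶ Ran(M)`. -/
noncomputable def Theta [IsIso adjR.counit] :
    (↥Q ⥤ ModuleCat.{0} k) ⥤ (P ⥤ ModuleCat.{0} k) where
  obj M := image (thetaHom k Q L R adjL adjR M)
  map {M N} f := image.map (Arrow.homMk' _ _ (thetaHom_naturality k Q L R adjL adjR f))
  map_id M := by
    have h : Arrow.homMk' _ _ (thetaHom_naturality k Q L R adjL adjR (𝟙 M)) =
        𝟙 (Arrow.mk (thetaHom k Q L R adjL adjR M)) :=
      Arrow.hom_ext _ _ (by simp) (by simp)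
    show image.map (Arrow.homMk' _ _ (thetaHom_naturality k Q L R adjL adjR (𝟙 M))) =
      𝟙 (image (thetaHom k Q L R adjL adjR M))
    rw [h, image.map_id]
    rfl
  map_comp {M N O} f g := by
    have h : Arrow.homMk' _ _ (thetaHom_naturality k Q L R adjL adjR (f ≫ g)) =
        Arrow.homMk' _ _ (thetaHom_naturality k Q L R adjL adjR f) ≫
          Arrow.homMk' _ _ (thetaHom_naturality k Q L R adjL adjR g) :=
      Arrow.hom_ext _ _ (by simp) (by simp)
    show image.map (Arrow.homMk' _ _ (thetaHom_naturality k Q L R adjL adjR (f ≫ g))) =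
      image.map (Arrow.homMk' _ _ (thetaHom_naturality k Q L R adjL adjR f)) ≫
        image.map (Arrow.homMk' _ _ (thetaHom_naturality k Q L R adjL adjR g))
    rw [h, image.map_comp]

end KanTheta

section ConvexHull

variable {P : Type} [PartialOrder P]

/-- The convex hull in `P` of a subset `I` of a full subposet `Q ⊆ P`:
`conv(I) = {x ∈ P : a ≤ x ≤ b for some a, b ∈ I}`. -/
def convexHullIn (Q : Set P) (I : Set ↥Q) : Set P :=
  {x : P | ∃ a ∈ I, ∃ b ∈ I, (a : P) ≤ x ∧ x ≤ (b : P)}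

lemma convexHullIn_isConvex (Q : Set P) (I : Set ↥Q) : IsConvex (convexHullIn Q I) := by
  rintro x y z ⟨a, ha, b, hb, hax, hxb⟩ ⟨a', ha', b', hb', ha'y, hyb'⟩ hxz hzy
  exact ⟨a, ha, b', hb', hax.trans hxz, hzy.trans hyb'⟩

end ConvexHull

/-! The restriction of `k_{conv I}` to `Q` is `k_I`, because `I` is convex in `Q`. Transposing
this identification along the two adjunctions factors `θ` as `Lan k_I ⟶ k_{conv I} ⟶ Ran k_I`.
Every point of `conv I` lies above and below points of `I`, and the structure maps of `k_{conv I}`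
between them are isomorphisms; so the first factor is pointwise epi, the second pointwise mono,
and `k_{conv I}` is the image of `θ`. -/

section ConvexHullInterval

variable {P : Type} [PartialOrder P] {Q : Set P}

lemma IsConvex.preimage_val {S : Set P} (hS : IsConvex S) :
    IsConvex (Subtype.val ⁻¹' S : Set ↥Q) :=
  fun _ _ _ hx hy hxz hzy => hS hx hy hxz hzy

lemma mem_convexHullIn_of_mem {I : Set ↥Q} {q : ↥Q} (hq : q ∈ I) : (q : P) ∈ convexHullIn Q I :=
  ⟨q, hq, q, hq, le_rfl, le_rfl⟩

lemma preimage_convexHullIn {I : Set ↥Q} (hI : IsConvex I) :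
    Subtype.val ⁻¹' convexHullIn Q I = I := by
  ext q
  exact ⟨fun ⟨a, ha, b, hb, haq, hqb⟩ => hI ha hb haq hqb, mem_convexHullIn_of_mem⟩

lemma convexHullIn_isIntervalSet {I : Set ↥Q} (hI : IsIntervalSet I) :
    IsIntervalSet (convexHullIn Q I) := by
  obtain ⟨⟨q₀, hq₀⟩, -, hconn⟩ := hI
  refine ⟨⟨q₀, mem_convexHullIn_of_mem hq₀⟩, convexHullIn_isConvex Q I, ?_⟩
  let incl : ↥I → ↥(convexHullIn Q I) := fun a => ⟨a.1, mem_convexHullIn_of_mem a.2⟩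
  intro x y
  obtain ⟨a, ha, -, -, hax, -⟩ := x.2
  obtain ⟨b, hb, -, -, hby, -⟩ := y.2
  have hab : ZigzagConnIn (convexHullIn Q I) (incl ⟨a, ha⟩) (incl ⟨b, hb⟩) :=
    (hconn _ _).lift incl fun _ _ huv => huv.imp Subtype.coe_le_coe.mpr Subtype.coe_le_coe.mpr
  exact .head (Or.inr hax) (hab.tail (Or.inl hby))

end ConvexHullInterval

section IntervalModules

variable (k : Type) [Field k] {P : Type} [PartialOrder P]

lemma intervalModule_obj_isZero {S : Set P} (hS : IsConvex S) {p : P} (hp : p ∉ S) :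
    IsZero ((intervalModule k S hS).obj p) := by
  have : Subsingleton ((intervalModule k S hS).obj p) := by
    simp only [intervalModule, if_neg hp]
    infer_instance
  exact ModuleCat.isZero_of_subsingleton _

lemma intervalModule_map_isIso {S : Set P} (hS : IsConvex S) {p q : P} (hp : p ∈ S) (hq : q ∈ S)
    (f : p ⟶ q) : IsIso ((intervalModule k S hS).map f) := by
  have hmap : ∀ x, ((intervalModule k S hS).map f x).1 = x.1 := fun x => by
    classical
    show (if p ∈ S ∧ q ∈ S then (1 : k) else 0) * x.1 = x.1
    simp [hp, hq]
  rw [ConcreteCategory.isIso_iff_bijective]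
  refine ⟨fun x y hxy => Subtype.ext ?_, fun y => ⟨⟨y.1, ?_⟩, Subtype.ext (hmap _)⟩⟩
  · simpa only [hmap] using congrArg Subtype.val hxy
  · simp [hp]

lemma resFunctor_obj_intervalModule {Q S : Set P} (hS : IsConvex S) :
    (resFunctor k Q).obj (intervalModule k S hS) =
      intervalModule k (Subtype.val ⁻¹' S) hS.preimage_val :=
  rfl

lemma intervalModule_congr {S T : Set P} (h : S = T) (hS : IsConvex S) (hT : IsConvex T) :
    intervalModule k S hS = intervalModule k T hT := by
  subst h; rfl

end IntervalModules

section ThetaFactorization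

variable (k : Type) [Field k] {P : Type} [PartialOrder P] (Q : Set P)
  (L R : (↥Q ⥤ ModuleCat.{0} k) ⥤ (P ⥤ ModuleCat.{0} k))
  (adjL : L ⊣ resFunctor k Q) (adjR : resFunctor k Q ⊣ R)
  {M : ↥Q ⥤ ModuleCat.{0} k} {N : P ⥤ ModuleCat.{0} k}

lemma thetaHom_eq_comp [IsIso adjR.counit] (e : (resFunctor k Q).obj N ≅ M) :
    thetaHom k Q L R adjL adjR M = (adjL.homEquiv M N).symm e.inv ≫ adjR.homEquiv N M e.hom := by
  rw [← Adjunction.homEquiv_naturality_right_symm, thetaHom]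
  congr 1
  have hψ : (resFunctor k Q).map (adjR.homEquiv N M e.hom) ≫ adjR.counit.app M = e.hom :=
    (adjR.homEquiv N M).symm_apply_apply e.hom
  rw [← cancel_mono (adjR.counit.app M), Category.assoc, hψ]
  simp

lemma epi_app_homEquiv_symm (α : M ⟶ (resFunctor k Q).obj N) {q : ↥Q} {p : P} (h : (q : P) ≤ p)
    [Epi (α.app q)] [Epi (N.map (homOfLE h))] : Epi (((adjL.homEquiv M N).symm α).app p) := by
  set φ := (adjL.homEquiv M N).symm α
  let u : M.obj q ⟶ (L.obj M).obj q := (adjL.unit.app M).app q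
  have hα : u ≫ φ.app q = α.app q := by
    have := congr_app ((adjL.homEquiv M N).apply_symm_apply α) q
    rwa [adjL.homEquiv_unit] at this
  have hcomp : (u ≫ (L.obj M).map (homOfLE h)) ≫ φ.app p = α.app q ≫ N.map (homOfLE h) := by
    rw [Category.assoc, φ.naturality, ← Category.assoc, hα]
    rfl
  have : Epi (α.app q ≫ N.map (homOfLE h)) := epi_comp' ‹_› ‹_›
  exact epi_of_epi_fac hcomp

lemma mono_app_homEquiv (β : (resFunctor k Q).obj N ⟶ M) {p : P} {q : ↥Q} (h : p ≤ (q : P))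
    [Mono (β.app q)] [Mono (N.map (homOfLE h))] : Mono ((adjR.homEquiv N M β).app p) := by
  set ψ := adjR.homEquiv N M β
  let c : (R.obj M).obj q ⟶ M.obj q := (adjR.counit.app M).app q
  have hβ : ψ.app q ≫ c = β.app q := by
    have := congr_app ((adjR.homEquiv N M).symm_apply_apply β) q
    rwa [adjR.homEquiv_counit] at this
  have hcomp : ψ.app p ≫ (R.obj M).map (homOfLE h) ≫ c = N.map (homOfLE h) ≫ β.app q := by
    rw [← Category.assoc, ← ψ.naturality, Category.assoc, hβ]
  have : Mono (N.map (homOfLE h) ≫ β.app q) := mono_comp' ‹_› ‹_›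
  exact mono_of_mono_fac hcomp

noncomputable def thetaObjIsoOfRes [IsIso adjR.counit] (e : (resFunctor k Q).obj N ≅ M)
    (hbelow : ∀ p, IsZero (N.obj p) ∨ ∃ (q : ↥Q) (h : (q : P) ≤ p), Epi (N.map (homOfLE h)))
    (habove : ∀ p, IsZero (N.obj p) ∨ ∃ (q : ↥Q) (h : p ≤ (q : P)), Mono (N.map (homOfLE h))) :
    (Theta k Q L R adjL adjR).obj M ≅ N :=
  have : ∀ p, Epi (((adjL.homEquiv M N).symm e.inv).app p) := fun p => by
    obtain hp | ⟨q, h, _⟩ := hbelow p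
    · exact hp.epi _
    · exact epi_app_homEquiv_symm k Q L adjL e.inv h
  have : ∀ p, Mono ((adjR.homEquiv N M e.hom).app p) := fun p => by
    obtain hp | ⟨q, h, _⟩ := habove p
    · exact hp.mono _
    · exact mono_app_homEquiv k Q R adjR e.hom h
  have := NatTrans.mono_of_mono_app (adjR.homEquiv N M e.hom)
  have : StrongEpi ((adjL.homEquiv M N).symm e.inv) :=
    have := NatTrans.epi_of_epi_app ((adjL.homEquiv M N).symm e.inv)
    strongEpi_of_epi _
  (image.isoStrongEpiMono _ _ (thetaHom_eq_comp k Q L R adjL adjR e).symm).symm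

end ThetaFactorization

section IntervalModulesOnHull

variable (k : Type) [Field k] {P : Type} [PartialOrder P] {Q : Set P}

lemma intervalModule_convexHullIn_isZero_or_epi (I : Set ↥Q) (p : P) :
    IsZero ((intervalModule k (convexHullIn Q I) (convexHullIn_isConvex Q I)).obj p) ∨
      ∃ (q : ↥Q) (h : (q : P) ≤ p),
        Epi ((intervalModule k (convexHullIn Q I) (convexHullIn_isConvex Q I)).map
          (homOfLE h)) := by
  by_cases hp : p ∈ convexHullIn Q I
  · obtain ⟨a, ha, -, -, hap, -⟩ := id hp
    have := intervalModule_map_isIso k (convexHullIn_isConvex Q I) (mem_convexHullIn_of_mem ha) hp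
      (homOfLE hap)
    exact .inr ⟨a, hap, inferInstance⟩
  · exact .inl (intervalModule_obj_isZero k _ hp)

lemma intervalModule_convexHullIn_isZero_or_mono (I : Set ↥Q) (p : P) :
    IsZero ((intervalModule k (convexHullIn Q I) (convexHullIn_isConvex Q I)).obj p) ∨
      ∃ (q : ↥Q) (h : p ≤ (q : P)),
        Mono ((intervalModule k (convexHullIn Q I) (convexHullIn_isConvex Q I)).map
          (homOfLE h)) := by
  by_cases hp : p ∈ convexHullIn Q I
  · obtain ⟨-, -, b, hb, -, hpb⟩ := id hp
    have := intervalModule_map_isIso k (convexHullIn_isConvex Q I) hp (mem_convexHullIn_of_mem hb)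
      (homOfLE hpb)
    exact .inr ⟨b, hpb, inferInstance⟩
  · exact .inl (intervalModule_obj_isZero k _ hp)

end IntervalModulesOnHull

theorem Theta_intervalModule
    (k : Type) [Field k] (P : Type) [PartialOrder P] (Q : Set P)
    (L R : (↥Q ⥤ ModuleCat.{0} k) ⥤ (P ⥤ ModuleCat.{0} k))
    (adjL : L ⊣ resFunctor k Q) (adjR : resFunctor k Q ⊣ R)
    [IsIso adjR.counit]
    (I : Set ↥Q) (hI : IsIntervalSet I) :
    Nonempty ((Theta k Q L R adjL adjR).obj (intervalModule k I hI.2.1) ≅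
      intervalModule k (convexHullIn Q I) (convexHullIn_isConvex Q I)) ∧
    IsIntervalSet (convexHullIn Q I) ∧
    IsIntervalModule k ((Theta k Q L R adjL adjR).obj (intervalModule k I hI.2.1)) := by
  have hres :
      (resFunctor k Q).obj (intervalModule k (convexHullIn Q I) (convexHullIn_isConvex Q I)) =
        intervalModule k I hI.2.1 :=
    (resFunctor_obj_intervalModule k _).trans
      (intervalModule_congr k (preimage_convexHullIn hI.2.1) _ _)
  let iso := thetaObjIsoOfRes k Q L R adjL adjR (eqToIso hres)
    (intervalModule_convexHullIn_isZero_or_epi k I) (intervalModule_convexHullIn_isZero_or_mono k I)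
  have hhull := convexHullIn_isIntervalSet hI
  exact ⟨⟨iso⟩, hhull, _, hhull, ⟨iso⟩⟩
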